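/- arXiv:2304.09537 — 7 statements merged into one kernel-verified Lean document; each statement's English description precedes it below -/
import Mathlib

section
/- Let (X,ρ) be a metric space, C ⊆ X nonempty closed, θ ∈ C, and suppose B(θ,M) ∩ C is compact for every M > 0. Let T_s : C → C be continuous and a paracontraction: for every z with T_s(z) = z and every y ∈ C with T_s(y) ≠ y, ρ(z, T_s(y)) < ρ(z, y), and ρ(z, T_s(x)) ≤ ρ(z, x) for all x ∈ C. Let z* ∈ C satisfy T_s(z*) = z*. Then for every M > 0 and ε > 0 there exists δ > 0 such that for every x ∈ C ∩ B(θ,M) with ρ(x, T_s(x)) > ε, one has ρ(z*, T_s(x)) ≤ ρ(z*, x) − δ. -/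
theorem stmt_0 {X : Type*} [MetricSpace X] (C : Set X) (hCne : C.Nonempty)
    (hCcl : IsClosed C) (θ : X) (hθ : θ ∈ C)
    (hcomp : ∀ M > (0:ℝ), IsCompact (Metric.closedBall θ M ∩ C))
    (S : X → X) (hSmaps : Set.MapsTo S C C) (hScont : ContinuousOn S C)
    (hpara : ∀ z ∈ C, S z = z → ∀ x ∈ C,
      dist z (S x) ≤ dist z x ∧ (S x ≠ x → dist z (S x) < dist z x))
    (zs : X) (hzs : zs ∈ C) (hfix : S zs = zs) :
    ∀ M > (0:ℝ), ∀ ε > (0:ℝ), ∃ δ > (0:ℝ),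
      ∀ x ∈ C ∩ Metric.closedBall θ M, dist x (S x) > ε →
        dist zs (S x) ≤ dist zs x - δ := by
  intro M hM ε hε
  set K := Metric.closedBall θ M ∩ C with hK
  have hKcomp : IsCompact K := hcomp M hM
  have hKC : K ⊆ C := Set.inter_subset_right
  have hg : ContinuousOn (fun x => dist x (S x)) K :=
    continuous_dist.comp_continuousOn (f := fun x => (x, S x)) (continuousOn_id.prodMk (hScont.mono hKC))
  set A := K ∩ (fun x => dist x (S x)) ⁻¹' Set.Ici ε with hA
  have hAclosed : IsClosed A :=
    hg.preimage_isClosed_of_isClosed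
      (Metric.isClosed_closedBall.inter hCcl) isClosed_Ici
  have hAcomp : IsCompact A := hKcomp.of_isClosed_subset hAclosed Set.inter_subset_left
  have hAC : A ⊆ C := fun x hx => hKC hx.1
  by_cases hne : A.Nonempty
  · have hf : ContinuousOn (fun x => dist zs x - dist zs (S x)) A :=
      ((continuous_const.dist continuous_id).continuousOn.sub
        (continuous_dist.comp_continuousOn (f := fun x => (zs, S x)) (continuousOn_const.prodMk (hScont.mono hAC))))
    obtain ⟨x₀, hx₀A, hmin⟩ := hAcomp.exists_isMinOn hne hf
    have hx₀C : x₀ ∈ C := hAC hx₀A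
    have hx₀ne : S x₀ ≠ x₀ := by
      intro h
      have : dist x₀ (S x₀) = 0 := by rw [h, dist_self]
      have := hx₀A.2
      simp only [Set.mem_preimage, Set.mem_Ici] at this
      linarith
    have hδpos : 0 < dist zs x₀ - dist zs (S x₀) := by
      have := (hpara zs hzs hfix x₀ hx₀C).2 hx₀ne
      linarith
    refine ⟨dist zs x₀ - dist zs (S x₀), hδpos, ?_⟩
    intro x hx hxε
    have hxA : x ∈ A := ⟨⟨hx.2, hx.1⟩, le_of_lt hxε⟩
    have := hmin hxA
    simp only [Set.mem_setOf_eq] at this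
    linarith [this]
  · refine ⟨1, one_pos, ?_⟩
    intro x hx hxε
    exact absurd ⟨x, ⟨hx.2, hx.1⟩, le_of_lt hxε⟩ hne
end

section
/- Let (X,ρ) be a metric space, C ⊆ X nonempty closed, θ ∈ C with B(θ,M) ∩ C compact for all M > 0, and T_1,…,T_m : C → C continuous paracontractions with a common fixed point z* ∈ B(θ,M). Then for every ε ∈ (0,1) there exists an integer Q ≥ 1 such that for every sequence {x_t} ⊆ C with ρ(x_0,θ) ≤ M and x_{t+1} = T_{s_t}(x_t) for some s_t ∈ {1,…,m}, the set {t ≥ 0 : ρ(x_t, x_{t+1}) > ε} has cardinality at most Q. -/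
theorem stmt_2 {X : Type*} [MetricSpace X] (C : Set X) (hCne : C.Nonempty)
    (hCcl : IsClosed C) (θ : X) (hθ : θ ∈ C)
    (hcomp : ∀ M > (0:ℝ), IsCompact (Metric.closedBall θ M ∩ C))
    (m : ℕ) (T : Fin m → X → X)
    (hTmaps : ∀ i, Set.MapsTo (T i) C C)
    (hTcont : ∀ i, ContinuousOn (T i) C)
    (hpara : ∀ i, ∀ z ∈ C, T i z = z → ∀ x ∈ C,
      dist z (T i x) ≤ dist z x ∧ (T i x ≠ x → dist z (T i x) < dist z x))
    (M : ℝ) (hM : 0 < M)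
    (zs : X) (hzs : zs ∈ C) (hfix : ∀ i, T i zs = zs)
    (hzsball : zs ∈ Metric.closedBall θ M) :
    ∀ ε ∈ Set.Ioo (0:ℝ) 1, ∃ Q : ℕ, 1 ≤ Q ∧
      ∀ (x : ℕ → X), (∀ t, x t ∈ C) → dist (x 0) θ ≤ M →
        ∀ (s : ℕ → Fin m), (∀ t, x (t + 1) = T (s t) (x t)) →
          {t : ℕ | dist (x t) (x (t + 1)) > ε}.Finite ∧
            {t : ℕ | dist (x t) (x (t + 1)) > ε}.ncard ≤ Q := by
  intro ε hε
  obtain ⟨hε0, hε1⟩ := hε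
  rcases Nat.eq_zero_or_pos m with hm | hm
  · subst hm
    exact ⟨1, le_refl 1, fun x hx h0 s hs => (s 0).elim0⟩
  have : Nonempty (Fin m) := ⟨⟨0, hm⟩⟩
  have hzsθ : dist zs θ ≤ M := Metric.mem_closedBall.mp hzsball
  set K := Metric.closedBall θ (3*M) ∩ C with hKdef
  have hKcomp : IsCompact K := hcomp (3*M) (by linarith)
  have hKcl : IsClosed K := (Metric.isClosed_closedBall).inter hCcl
  have hKC : K ⊆ C := Set.inter_subset_right
  -- uniform decrease on each map
  have hd : ∀ i : Fin m, ∃ d : ℝ, 0 < d ∧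
      ∀ y ∈ K, ε ≤ dist y (T i y) → dist zs (T i y) ≤ dist zs y - d := by
    intro i
    by_cases hA : ∃ y ∈ K, ε ≤ dist y (T i y)
    · set A : Set X := K ∩ {y | dist y (T i y) ∈ Set.Ici ε} with hAdef
      have hAK : A ⊆ K := Set.inter_subset_left
      have hAC : A ⊆ C := fun y hy => hKC (hAK hy)
      have hcontd : ContinuousOn (fun y => dist y (T i y)) K :=
        continuous_dist.comp_continuousOn (continuousOn_id.prodMk ((hTcont i).mono hKC))
      have hAcl : IsClosed A :=
        hcontd.preimage_isClosed_of_isClosed hKcl isClosed_Ici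
      have hAcomp : IsCompact A := hKcomp.of_isClosed_subset hAcl hAK
      have hAne : A.Nonempty := by
        obtain ⟨y, hyK, hy⟩ := hA
        exact ⟨y, hyK, hy⟩
      have hcontg : ContinuousOn (fun y => dist zs y - dist zs (T i y)) A :=
        ((continuous_const.dist continuous_id).continuousOn).sub
          (continuous_dist.comp_continuousOn (continuousOn_const.prodMk ((hTcont i).mono hAC)))
      obtain ⟨a, haA, hamin⟩ := hAcomp.exists_isMinOn hAne hcontg
      have haC : a ∈ C := hAC haA
      have hane : T i a ≠ a := by
        intro h
        have : dist a (T i a) = 0 := by rw [h]; simp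
        have hεa : ε ≤ dist a (T i a) := haA.2
        linarith
      have hstrict := (hpara i zs hzs (hfix i) a haC).2 hane
      refine ⟨dist zs a - dist zs (T i a), by linarith, ?_⟩
      intro y hyK hy
      have hyA : y ∈ A := ⟨hyK, hy⟩
      have := hamin hyA
      simp only [Set.mem_setOf_eq] at this
      linarith [this]
    · exact ⟨1, one_pos, fun y hyK hy => absurd ⟨y, hyK, hy⟩ hA⟩
  choose d hd0 hdle using hd
  set δ : ℝ := Finset.univ.inf' (Finset.univ_nonempty) d with hδdef
  have hδ0 : 0 < δ := by
    rw [hδdef, Finset.lt_inf'_iff]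
    exact fun i _ => hd0 i
  have hδle : ∀ i, δ ≤ d i := fun i => Finset.inf'_le d (Finset.mem_univ i)
  refine ⟨⌈2*M/δ⌉₊ + 1, Nat.le_add_left 1 _, ?_⟩
  intro x hx h0 s hs
  -- monotonicity
  have hmono : ∀ t, dist zs (x (t+1)) ≤ dist zs (x t) := by
    intro t
    rw [hs t]
    exact (hpara (s t) zs hzs (hfix (s t)) (x t) (hx t)).1
  have h0' : dist zs (x 0) ≤ 2*M := by
    have := dist_triangle zs θ (x 0)
    have h2 : dist θ (x 0) = dist (x 0) θ := dist_comm θ (x 0)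
    linarith
  have hub : ∀ t, dist zs (x t) ≤ 2*M := by
    intro t
    induction t with
    | zero => exact h0'
    | succ n ih => exact le_trans (hmono n) ih
  have hxK : ∀ t, x t ∈ K := by
    intro t
    refine ⟨Metric.mem_closedBall.mpr ?_, hx t⟩
    have h1 := dist_triangle (x t) zs θ
    have h2 : dist (x t) zs = dist zs (x t) := dist_comm _ _
    have := hub t
    linarith
  have hdrop : ∀ t, ε < dist (x t) (x (t+1)) →
      dist zs (x (t+1)) ≤ dist zs (x t) - δ := by
    intro t ht
    rw [hs t] at ht ⊢
    have := hdle (s t) (x t) (hxK t) (le_of_lt ht)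
    have := hδle (s t)
    linarith
  -- counting
  set B : ℕ → Finset ℕ :=
    fun n => (Finset.range n).filter (fun t => ε < dist (x t) (x (t+1))) with hBdef
  have hkey : ∀ n, δ * (B n).card ≤ dist zs (x 0) - dist zs (x n) := by
    intro n
    induction n with
    | zero => simp [hBdef]
    | succ n ih =>
      have hBsucc : B (n+1) =
          if ε < dist (x n) (x (n+1)) then insert n (B n) else B n := by
        rw [hBdef]
        simp only [Finset.range_add_one, Finset.filter_insert]
      by_cases hb : ε < dist (x n) (x (n+1))
      · have hnB : n ∉ B n := by
          rw [hBdef]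
          simp
        rw [hBsucc, if_pos hb, Finset.card_insert_of_notMem hnB]
        push_cast
        have := hdrop n hb
        nlinarith
      · rw [hBsucc, if_neg hb]
        have := hmono n
        linarith
  have hcard : ∀ F : Finset ℕ, (∀ t ∈ F, ε < dist (x t) (x (t+1))) →
      F.card ≤ ⌈2*M/δ⌉₊ + 1 := by
    intro F hF
    set n := F.sup id + 1 with hn
    have hFB : F ⊆ B n := by
      intro t ht
      rw [hBdef]
      simp only [Finset.mem_filter, Finset.mem_range]
      exact ⟨Nat.lt_succ_of_le (Finset.le_sup (f := id) ht), hF t ht⟩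
    have h1 : δ * (B n).card ≤ 2*M := by
      have := hkey n
      have := dist_nonneg (x := zs) (y := x n)
      linarith [hub 0]
    have h2 : ((B n).card : ℝ) ≤ 2*M/δ := by
      rw [le_div_iff₀ hδ0]
      linarith [mul_comm δ ((B n).card : ℝ)]
    have h3 : (B n).card ≤ ⌈2*M/δ⌉₊ := by
      have := Nat.le_ceil (2*M/δ)
      exact_mod_cast le_trans h2 this
    exact le_trans (le_trans (Finset.card_le_card hFB) h3) (Nat.le_add_right _ 1)
  have hfin : {t : ℕ | dist (x t) (x (t + 1)) > ε}.Finite := by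
    by_contra hinf
    obtain ⟨F, hFsub, hFcard⟩ :=
      Set.Infinite.exists_subset_card_eq hinf (⌈2*M/δ⌉₊ + 2)
    have := hcard F (fun t ht => hFsub ht)
    omega
  refine ⟨hfin, ?_⟩
  have := hcard hfin.toFinset (fun t ht => (Set.Finite.mem_toFinset hfin).mp ht)
  rwa [← Set.ncard_coe_finset, Set.Finite.coe_toFinset] at this
end

section
/- Let (X,ρ) be a metric space, C ⊆ X nonempty closed, θ ∈ C with B(θ,M) ∩ C compact for all M > 0, and T_1,…,T_m : C → C continuous paracontractions having a common fixed point. If {x_t} ⊆ C satisfies x_{t+1} = T_{s_t}(x_t) for some indices s_t ∈ {1,…,m}, then ρ(x_t, x_{t+1}) → 0 as t → ∞. -/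
theorem stmt_3 {X : Type*} [MetricSpace X] (C : Set X) (hCne : C.Nonempty)
    (hCcl : IsClosed C) (θ : X) (hθ : θ ∈ C)
    (hcomp : ∀ M > (0:ℝ), IsCompact (Metric.closedBall θ M ∩ C))
    (m : ℕ) (T : Fin m → X → X)
    (hTmaps : ∀ i, Set.MapsTo (T i) C C)
    (hTcont : ∀ i, ContinuousOn (T i) C)
    (hpara : ∀ i, ∀ z ∈ C, T i z = z → ∀ x ∈ C,
      dist z (T i x) ≤ dist z x ∧ (T i x ≠ x → dist z (T i x) < dist z x))
    (hcommon : ∃ z ∈ C, ∀ i, T i z = z)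
    (x : ℕ → X) (hx : ∀ t, x t ∈ C) (s : ℕ → Fin m)
    (hstep : ∀ t, x (t + 1) = T (s t) (x t)) :
    Filter.Tendsto (fun t => dist (x t) (x (t + 1))) Filter.atTop (nhds 0) := by
  obtain ⟨z, hzC, hzfix⟩ := hcommon
  set d : ℕ → ℝ := fun t => dist z (x t) with hd
  have hanti : Antitone d := by
    apply antitone_nat_of_succ_le
    intro t
    have := (hpara (s t) z hzC (hzfix (s t)) (x t) (hx t)).1
    simpa [hd, hstep t] using this
  have hbdd : BddBelow (Set.range d) := ⟨0, by rintro _ ⟨t, rfl⟩; exact dist_nonneg⟩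
  have hL : Filter.Tendsto d Filter.atTop (nhds (⨅ t, d t)) :=
    tendsto_atTop_ciInf hanti hbdd
  set L := ⨅ t, d t with hLdef
  -- all x t live in a compact set
  set M : ℝ := max 1 (dist θ z + d 0) with hM
  have hMpos : (0:ℝ) < M := lt_of_lt_of_le one_pos (le_max_left _ _)
  have hmem : ∀ t, x t ∈ Metric.closedBall θ M ∩ C := by
    intro t
    refine ⟨Metric.mem_closedBall.2 ?_, hx t⟩
    calc dist (x t) θ ≤ dist (x t) z + dist z θ := dist_triangle _ _ _
      _ = dist θ z + d t := by rw [dist_comm (x t) z, dist_comm z θ]; ring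
      _ ≤ dist θ z + d 0 := by
          have := hanti (Nat.zero_le t); linarith
      _ ≤ M := le_max_right _ _
  have hK : IsCompact (Metric.closedBall θ M ∩ C) := hcomp M hMpos
  by_contra hcon
  rw [Metric.tendsto_atTop] at hcon
  push_neg at hcon
  obtain ⟨ε, hε, hfreq⟩ := hcon
  have hfreq' : ∃ᶠ t in Filter.atTop, ε ≤ dist (x t) (x (t + 1)) := by
    rw [Filter.frequently_atTop]
    intro N
    obtain ⟨t, htN, ht⟩ := hfreq N
    refine ⟨t, htN, ?_⟩
    have : dist (dist (x t) (x (t+1))) 0 = dist (x t) (x (t+1)) := by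
      simp [Real.dist_eq, abs_of_nonneg dist_nonneg]
    linarith [this ▸ ht]
  -- pigeonhole on the index i
  have hi : ∃ i : Fin m, ∃ᶠ t in Filter.atTop,
      ε ≤ dist (x t) (x (t + 1)) ∧ s t = i := by
    by_contra hno
    simp only [not_exists] at hno
    simp only [Filter.not_frequently] at hno
    have hall : ∀ᶠ t in Filter.atTop, ∀ i : Fin m,
        ¬(ε ≤ dist (x t) (x (t + 1)) ∧ s t = i) := Filter.eventually_all.2 hno
    have := hfreq'.and_eventually hall
    obtain ⟨t, ht1, ht2⟩ := this.exists
    exact ht2 (s t) ⟨ht1, rfl⟩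
  obtain ⟨i, hi⟩ := hi
  obtain ⟨φ, hφmono, hφ⟩ := Filter.extraction_of_frequently_atTop hi
  -- compactness: convergent subsequence
  obtain ⟨y, hyK, ψ, hψmono, hconv⟩ := hK.tendsto_subseq (fun k => hmem (φ k))
  have hyC : y ∈ C := hyK.2
  set σ : ℕ → ℕ := φ ∘ ψ with hσ
  have hσmono : StrictMono σ := hφmono.comp hψmono
  have hconv' : Filter.Tendsto (fun k => x (σ k)) Filter.atTop (nhds y) := hconv
  have hsσ : ∀ k, s (σ k) = i := fun k => (hφ (ψ k)).2
  have hεσ : ∀ k, ε ≤ dist (x (σ k)) (x (σ k + 1)) := fun k => (hφ (ψ k)).1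
  -- continuity: x (σ k + 1) = T i (x (σ k)) → T i y
  have hnhdsW : Filter.Tendsto (fun k => x (σ k)) Filter.atTop (nhdsWithin y C) :=
    tendsto_nhdsWithin_of_tendsto_nhds_of_eventually_within _ hconv'
      (Filter.Eventually.of_forall fun k => hx (σ k))
  have hT : Filter.Tendsto (fun k => x (σ k + 1)) Filter.atTop (nhds (T i y)) := by
    have : Filter.Tendsto (fun k => T i (x (σ k))) Filter.atTop (nhds (T i y)) :=
      (hTcont i y hyC).tendsto.comp hnhdsW
    refine this.congr fun k => ?_
    rw [hstep (σ k), hsσ k]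
  -- T i y ≠ y
  have hdistyT : ε ≤ dist y (T i y) := by
    have : Filter.Tendsto (fun k => dist (x (σ k)) (x (σ k + 1))) Filter.atTop
        (nhds (dist y (T i y))) := hconv'.dist hT
    exact ge_of_tendsto' this hεσ
  have hne : T i y ≠ y := by
    intro h
    rw [h] at hdistyT
    simp at hdistyT
    linarith
  -- limits of d along the subsequences
  have h1 : Filter.Tendsto (fun k => d (σ k)) Filter.atTop (nhds L) :=
    hL.comp hσmono.tendsto_atTop
  have h2 : Filter.Tendsto (fun k => d (σ k + 1)) Filter.atTop (nhds L) :=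
    hL.comp (Filter.tendsto_atTop_mono (fun k => Nat.le_succ (σ k))
      hσmono.tendsto_atTop)
  have h1' : Filter.Tendsto (fun k => d (σ k)) Filter.atTop (nhds (dist z y)) :=
    tendsto_const_nhds.dist hconv'
  have h2' : Filter.Tendsto (fun k => d (σ k + 1)) Filter.atTop (nhds (dist z (T i y))) :=
    tendsto_const_nhds.dist hT
  have e1 : dist z y = L := tendsto_nhds_unique h1' h1
  have e2 : dist z (T i y) = L := tendsto_nhds_unique h2' h2
  have := (hpara i z hzC (hzfix i) y hyC).2 hne
  rw [e1, e2] at this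
  exact lt_irrefl L this
end

section
/- Let (X,ρ) be a metric space, C ⊆ X nonempty closed, θ ∈ C with B(θ,M) ∩ C compact for all M > 0. Let T_1,…,T_m : C → C be continuous paracontractions with a common fixed point, and let φ : X → nonempty subsets of {1,…,m} be outer semicontinuous in the sense that for each x ∈ C there is δ > 0 with φ(y) ⊆ φ(x) for all y ∈ B(x,δ) ∩ C. Suppose {x_t} ⊆ C satisfies x_{t+1} ∈ {T_i(x_t) : i ∈ φ(x_t)} for all t. Then the sequence {x_t} converges to some x* ∈ C. -/
theorem stmt_5 {X : Type*} [MetricSpace X] (C : Set X) (hCne : C.Nonempty)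
    (hCcl : IsClosed C) (θ : X) (hθ : θ ∈ C)
    (hcomp : ∀ M > (0:ℝ), IsCompact (Metric.closedBall θ M ∩ C))
    (m : ℕ) (T : Fin m → X → X)
    (hTmaps : ∀ i, Set.MapsTo (T i) C C)
    (hTcont : ∀ i, ContinuousOn (T i) C)
    (hpara : ∀ i, ∀ z ∈ C, T i z = z → ∀ x ∈ C,
      dist z (T i x) ≤ dist z x ∧ (T i x ≠ x → dist z (T i x) < dist z x))
    (hcommon : ∃ z ∈ C, ∀ i, T i z = z)
    (φ : X → Set (Fin m)) (hφne : ∀ x, (φ x).Nonempty)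
    (hφosc : ∀ x ∈ C, ∃ δ > (0:ℝ), ∀ y ∈ C, dist y x ≤ δ → φ y ⊆ φ x)
    (x : ℕ → X) (hx : ∀ t, x t ∈ C)
    (hstep : ∀ t, ∃ i ∈ φ (x t), x (t + 1) = T i (x t)) :
    ∃ xs ∈ C, Filter.Tendsto x Filter.atTop (nhds xs) := by
  obtain ⟨z, hzC, hz⟩ := hcommon
  set d : ℕ → ℝ := fun t => dist z (x t) with hd
  have hdsucc : ∀ t, d (t + 1) ≤ d t := by
    intro t
    obtain ⟨i, hiφ, heq⟩ := hstep t
    have := (hpara i z hzC (hz i) (x t) (hx t)).1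
    simpa [hd, heq] using this
  have hanti : Antitone d := antitone_nat_of_succ_le hdsucc
  have hbdd : BddBelow (Set.range d) := ⟨0, by rintro _ ⟨t, rfl⟩; exact dist_nonneg⟩
  set L : ℝ := ⨅ t, d t with hLdef
  have hL : Filter.Tendsto d Filter.atTop (nhds L) := tendsto_atTop_ciInf hanti hbdd
  have hLle : ∀ t, L ≤ d t := fun t => ciInf_le hbdd t
  -- compactness: the sequence stays in a compact set
  set M : ℝ := dist θ z + d 0 + 1 with hM
  have hMpos : (0:ℝ) < M := by
    have h1 : (0:ℝ) ≤ dist θ z := dist_nonneg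
    have h2 : (0:ℝ) ≤ d 0 := dist_nonneg
    linarith
  have hmem : ∀ t, x t ∈ Metric.closedBall θ M ∩ C := by
    intro t
    refine ⟨?_, hx t⟩
    rw [Metric.mem_closedBall]
    have h1 : dist (x t) θ ≤ dist (x t) z + dist z θ := dist_triangle _ _ _
    have h2 : dist (x t) z = d t := by rw [dist_comm]
    have h3 : d t ≤ d 0 := hanti (Nat.zero_le t)
    have h4 : dist z θ = dist θ z := dist_comm _ _
    linarith
  obtain ⟨a, ha, g, hg, hxa⟩ := (hcomp M hMpos).tendsto_subseq hmem
  have haC : a ∈ C := ha.2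
  -- dist z a = L
  have hdza : dist z a = L := by
    have h1 : Filter.Tendsto (fun k => dist z ((x ∘ g) k)) Filter.atTop (nhds L) :=
      hL.comp hg.tendsto_atTop
    have h2 : Filter.Tendsto (fun k => dist z ((x ∘ g) k)) Filter.atTop (nhds (dist z a)) :=
      tendsto_const_nhds.dist hxa
    exact tendsto_nhds_unique h2 h1
  -- outer semicontinuity at a
  obtain ⟨δ, hδpos, hδsub⟩ := hφosc a haC
  -- radii for "bad" indices
  have hEps : ∀ i : Fin m, ∃ ε > (0:ℝ),
      (i ∈ φ a ∧ T i a ≠ a) → ∀ y ∈ C, dist y a < ε → dist z (T i y) < L := by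
    intro i
    by_cases hbad : i ∈ φ a ∧ T i a ≠ a
    · have hlt : dist z (T i a) < L := by
        have := (hpara i z hzC (hz i) a haC).2 hbad.2
        rwa [hdza] at this
      have hcw : ContinuousWithinAt (T i) C a := hTcont i a haC
      rw [Metric.continuousWithinAt_iff] at hcw
      obtain ⟨ε, hεpos, hε⟩ := hcw (L - dist z (T i a)) (by linarith)
      refine ⟨ε, hεpos, fun _ y hyC hyd => ?_⟩
      have h1 : dist (T i y) (T i a) < L - dist z (T i a) := hε hyC hyd
      have h2 : dist z (T i y) ≤ dist z (T i a) + dist (T i a) (T i y) := dist_triangle _ _ _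
      have h3 : dist (T i a) (T i y) = dist (T i y) (T i a) := dist_comm _ _
      linarith
    · exact ⟨1, one_pos, fun h => absurd h hbad⟩
  choose ε hεpos hεprop using hEps
  obtain ⟨i0, hi0⟩ := hφne a
  have hne : (Finset.univ : Finset (Fin m)).Nonempty := ⟨i0, Finset.mem_univ i0⟩
  set r : ℝ := min δ (Finset.univ.inf' hne ε) with hr
  have hrpos : 0 < r := lt_min hδpos (by
    rw [Finset.lt_inf'_iff]
    exact fun i _ => hεpos i)
  -- key step : once within r of a, distance to a is nonincreasing
  have key : ∀ t, dist (x t) a < r → dist (x (t + 1)) a ≤ dist (x t) a := by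
    intro t ht
    obtain ⟨i, hiφ, heq⟩ := hstep t
    have hiφa : i ∈ φ a :=
      hδsub (x t) (hx t) (le_of_lt (lt_of_lt_of_le ht (min_le_left _ _))) hiφ
    by_cases hfix : T i a = a
    · have h := (hpara i a haC hfix (x t) (hx t)).1
      rw [heq, dist_comm (T i (x t)) a, dist_comm (x t) a]
      exact h
    · exfalso
      have hεr : r ≤ ε i :=
        le_trans (min_le_right _ _) (Finset.inf'_le _ (Finset.mem_univ i))
      have hlt : dist z (x (t + 1)) < L := by
        rw [heq]
        exact hεprop i ⟨hiφa, hfix⟩ (x t) (hx t) (lt_of_lt_of_le ht hεr)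
      exact absurd hlt (not_lt.2 (hLle (t + 1)))
  have key2 : ∀ t s, dist (x t) a < r → dist (x (t + s)) a ≤ dist (x t) a := by
    intro t s ht
    induction s with
    | zero => simp
    | succ s ih =>
      have h1 : dist (x (t + s)) a < r := lt_of_le_of_lt ih ht
      calc dist (x (t + s + 1)) a ≤ dist (x (t + s)) a := key _ h1
        _ ≤ dist (x t) a := ih
  refine ⟨a, haC, ?_⟩
  rw [Metric.tendsto_atTop]
  intro η hη
  set η' : ℝ := min η r with hη'
  have hη'pos : 0 < η' := lt_min hη hrpos
  have hsub := Metric.tendsto_atTop.1 hxa η' hη'pos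
  obtain ⟨K, hK⟩ := hsub
  refine ⟨g K, fun t hts => ?_⟩
  have hKd : dist (x (g K)) a < η' := hK K le_rfl
  obtain ⟨s, rfl⟩ : ∃ s, t = g K + s := ⟨t - g K, (Nat.add_sub_cancel' hts).symm⟩
  have h1 : dist (x (g K + s)) a ≤ dist (x (g K)) a :=
    key2 _ _ (lt_of_lt_of_le hKd (min_le_right _ _))
  exact lt_of_le_of_lt h1 (lt_of_lt_of_le hKd (min_le_left _ _))
end

section
/- Under the hypotheses of the previous theorem (metric space, compact balls intersected with C, continuous paracontractions T_1,…,T_m with a common fixed point, outer semicontinuous index map φ, and x_{t+1} ∈ {T_i(x_t) : i ∈ φ(x_t)}), the limit x* = lim x_t satisfies: there is a natural number t_0 such that for every t ≥ t_0, φ(x_t) ⊆ φ(x*), and whenever i ∈ φ(x_t) satisfies x_{t+1} = T_i(x_t), then T_i(x*) = x*. In particular x* ∈ T(x*), i.e. x* is a fixed point of the set-valued operator T. -/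
theorem stmt_6 {X : Type*} [MetricSpace X] (C : Set X) (hCne : C.Nonempty)
    (hCcl : IsClosed C) (θ : X) (hθ : θ ∈ C)
    (hcomp : ∀ M > (0:ℝ), IsCompact (Metric.closedBall θ M ∩ C))
    (m : ℕ) (T : Fin m → X → X)
    (hTmaps : ∀ i, Set.MapsTo (T i) C C)
    (hTcont : ∀ i, ContinuousOn (T i) C)
    (hpara : ∀ i, ∀ z ∈ C, T i z = z → ∀ x ∈ C,
      dist z (T i x) ≤ dist z x ∧ (T i x ≠ x → dist z (T i x) < dist z x))
    (hcommon : ∃ z ∈ C, ∀ i, T i z = z)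
    (φ : X → Set (Fin m)) (hφne : ∀ x, (φ x).Nonempty)
    (hφosc : ∀ x ∈ C, ∃ δ > (0:ℝ), ∀ y ∈ C, dist y x ≤ δ → φ y ⊆ φ x)
    (x : ℕ → X) (hx : ∀ t, x t ∈ C)
    (hstep : ∀ t, ∃ i ∈ φ (x t), x (t + 1) = T i (x t)) :
    ∃ xs ∈ C, Filter.Tendsto x Filter.atTop (nhds xs) ∧
      (∃ t₀ : ℕ, ∀ t ≥ t₀, φ (x t) ⊆ φ xs ∧
        ∀ i ∈ φ (x t), x (t + 1) = T i (x t) → T i xs = xs) ∧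
      ∃ i ∈ φ xs, T i xs = xs := by
  obtain ⟨z, hzC, hzfix⟩ := hcommon
  choose idx hidxφ hidxeq using hstep
  -- distances to z are antitone
  have hdec : ∀ t, dist z (x (t+1)) ≤ dist z (x t) := by
    intro t
    rw [hidxeq t]
    exact (hpara (idx t) z hzC (hzfix _) (x t) (hx t)).1
  have hanti : Antitone fun t => dist z (x t) := antitone_nat_of_succ_le hdec
  set d := ⨅ t, dist z (x t) with hd
  have hbdd : BddBelow (Set.range fun t => dist z (x t)) := by
    refine ⟨0, ?_⟩; rintro _ ⟨t, rfl⟩; positivity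
  have htendd : Filter.Tendsto (fun t => dist z (x t)) Filter.atTop (nhds d) :=
    tendsto_atTop_ciInf hanti hbdd
  have hge : ∀ t, d ≤ dist z (x t) := fun t => ciInf_le hbdd t
  -- compactness: extract a convergent subsequence
  set M := dist θ z + dist z (x 0) + 1 with hM
  have hMpos : (0:ℝ) < M := by positivity
  have hmem : ∀ t, x t ∈ Metric.closedBall θ M ∩ C := by
    intro t
    refine ⟨Metric.mem_closedBall.mpr ?_, hx t⟩
    have h1 : dist (x t) θ ≤ dist (x t) z + dist z θ := dist_triangle _ _ _
    have h2 : dist z (x t) ≤ dist z (x 0) := hanti (Nat.zero_le t)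
    have h3 : dist (x t) z = dist z (x t) := dist_comm _ _
    have h4 : dist z θ = dist θ z := dist_comm _ _
    linarith
  obtain ⟨xs, hxsK, s, hs, hconvs⟩ := (hcomp M hMpos).tendsto_subseq hmem
  have hxsC : xs ∈ C := hxsK.2
  -- dist z xs = d
  have hdxs : dist z xs = d := by
    have h1 : Filter.Tendsto (fun k => dist z (x (s k))) Filter.atTop (nhds (dist z xs)) :=
      tendsto_const_nhds.dist hconvs
    have h2 : Filter.Tendsto (fun k => dist z (x (s k))) Filter.atTop (nhds d) :=
      htendd.comp hs.tendsto_atTop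
    exact tendsto_nhds_unique h1 h2
  obtain ⟨δ, hδpos, hδprop⟩ := hφosc xs hxsC
  -- key neighborhood property per index
  have key : ∀ j : Fin m, ∃ ε > (0:ℝ), T j xs ≠ xs →
      ∀ y ∈ C, dist y xs < ε → dist z (T j y) < d := by
    intro j
    by_cases hfix : T j xs = xs
    · exact ⟨1, one_pos, fun h => absurd hfix h⟩
    · have hlt : dist z (T j xs) < d := by
        have := (hpara j z hzC (hzfix j) xs hxsC).2 hfix
        rwa [hdxs] at this
      have hcont : ContinuousWithinAt (T j) C xs := hTcont j xs hxsC
      have htd : Filter.Tendsto (fun y => dist z (T j y)) (nhdsWithin xs C)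
          (nhds (dist z (T j xs))) := tendsto_const_nhds.dist hcont
      have hev : {y | dist z (T j y) < d} ∈ nhdsWithin xs C :=
        htd (Iio_mem_nhds hlt)
      rw [Metric.mem_nhdsWithin_iff] at hev
      obtain ⟨ε, hε, hball⟩ := hev
      exact ⟨ε, hε, fun _ y hyC hyd => hball ⟨Metric.mem_ball.mpr hyd, hyC⟩⟩
  choose ε hεpos hεprop using key
  haveI : Nonempty (Fin m) := ⟨(hφne (x 0)).some⟩
  set ε0 := Finset.univ.inf' Finset.univ_nonempty ε with hε0
  have hε0pos : 0 < ε0 := by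
    rw [hε0, Finset.lt_inf'_iff]
    exact fun i _ => hεpos i
  have hε0le : ∀ j, ε0 ≤ ε j := fun j => Finset.inf'_le _ (Finset.mem_univ j)
  set r := min δ ε0 with hr
  have hrpos : 0 < r := lt_min hδpos hε0pos
  -- near xs, any valid step index fixes xs
  have hfixstep : ∀ t, dist (x t) xs < r → ∀ i, x (t+1) = T i (x t) → T i xs = xs := by
    intro t ht i hieq
    by_contra hne
    have h1 : dist z (T i (x t)) < d := by
      refine hεprop i hne (x t) (hx t) (lt_of_lt_of_le ht ?_)
      exact le_trans (min_le_right _ _) (hε0le i)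
    rw [← hieq] at h1
    exact absurd (hge (t+1)) (not_le.mpr h1)
  -- near xs, the distance to xs is non-increasing
  have hstay : ∀ t, dist (x t) xs < r → dist (x (t+1)) xs ≤ dist (x t) xs := by
    intro t ht
    have hfx : T (idx t) xs = xs := hfixstep t ht (idx t) (hidxeq t)
    have := (hpara (idx t) xs hxsC hfx (x t) (hx t)).1
    rw [hidxeq t, dist_comm (T (idx t) (x t)) xs, dist_comm (x t) xs]
    exact this
  -- full convergence
  have hconv : Filter.Tendsto x Filter.atTop (nhds xs) := by
    rw [Metric.tendsto_atTop]
    intro ε' hε'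
    have hr'pos : 0 < min r ε' := lt_min hrpos hε'
    obtain ⟨K, hK⟩ := (Metric.tendsto_atTop.mp hconvs) (min r ε') hr'pos
    have hK0 : dist (x (s K)) xs < min r ε' := hK K le_rfl
    have hind : ∀ p, dist (x (s K + p)) xs < min r ε' := by
      intro p
      induction p with
      | zero => simpa using hK0
      | succ p ih =>
        have h1 : dist (x (s K + p)) xs < r := lt_of_lt_of_le ih (min_le_left _ _)
        have := hstay (s K + p) h1
        calc dist (x (s K + p + 1)) xs ≤ dist (x (s K + p)) xs := this
          _ < min r ε' := ih
    refine ⟨s K, fun n hn => ?_⟩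
    have := hind (n - s K)
    rw [Nat.add_sub_cancel' hn] at this
    exact lt_of_lt_of_le this (min_le_right _ _)
  obtain ⟨t₀, ht₀⟩ := Metric.tendsto_atTop.mp hconv r hrpos
  have hsub : ∀ t ≥ t₀, φ (x t) ⊆ φ xs := by
    intro t ht
    refine hδprop (x t) (hx t) (le_of_lt (lt_of_lt_of_le (ht₀ t ht) (min_le_left _ _)))
  refine ⟨xs, hxsC, hconv, ⟨t₀, fun t ht => ⟨hsub t ht,
    fun i _ hieq => hfixstep t (ht₀ t ht) i hieq⟩⟩, ?_⟩
  exact ⟨idx t₀, hsub t₀ le_rfl (hidxφ t₀),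
    hfixstep t₀ (ht₀ t₀ le_rfl) (idx t₀) (hidxeq t₀)⟩
end

section
/- Let (X,‖·‖) be a normed space, C ⊆ X nonempty closed convex, θ ∈ C with B(θ,M) ∩ C compact for all M > 0, and T_1,…,T_m : C → C continuous paracontractions with a common fixed point z* ∈ B(θ,M). Fix κ ∈ (0,1/2). Then for every ε ∈ (0,1) there exists an integer Q ≥ 1 such that for every {λ_t} ⊆ (κ,1−κ) and every sequence {x_t} ⊆ C with ‖x_0 − θ‖ ≤ M and x_{t+1} = (1−λ_t)x_t + λ_t T_{s_t}(x_t) for some s_t ∈ {1,…,m}, the set {t : ‖x_t − x_{t+1}‖ > ε} has cardinality at most Q, and consequently ‖x_t − x_{t+1}‖ → 0. -/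
lemma aux_key {X : Type*} [NormedAddCommGroup X] [NormedSpace ℝ X]
    (C : Set X) (hCcl : IsClosed C)
    (θ : X)
    (hcomp : ∀ M > (0:ℝ), IsCompact (Metric.closedBall θ M ∩ C))
    (m : ℕ) (T : Fin m → X → X)
    (hTcont : ∀ i, ContinuousOn (T i) C)
    (hpara : ∀ i, ∀ z ∈ C, T i z = z → ∀ x ∈ C,
      ‖z - T i x‖ ≤ ‖z - x‖ ∧ (T i x ≠ x → ‖z - T i x‖ < ‖z - x‖))
    (M : ℝ) (hM : 0 < M)
    (zs : X) (hzs : zs ∈ C) (hfix : ∀ i, T i zs = zs)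
    (hzsball : zs ∈ Metric.closedBall θ M)
    (κ : ℝ) (hκ : κ ∈ Set.Ioo (0:ℝ) (1/2)) :
    ∀ ε ∈ Set.Ioo (0:ℝ) 1, ∃ Q : ℕ, 1 ≤ Q ∧
      ∀ (lam : ℕ → ℝ), (∀ t, lam t ∈ Set.Ioo κ (1 - κ)) →
      ∀ (x : ℕ → X), (∀ t, x t ∈ C) → ‖x 0 - θ‖ ≤ M →
      ∀ (s : ℕ → Fin m),
        (∀ t, x (t + 1) = (1 - lam t) • x t + lam t • T (s t) (x t)) →
          {t : ℕ | ‖x t - x (t + 1)‖ > ε}.Finite ∧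
            {t : ℕ | ‖x t - x (t + 1)‖ > ε}.ncard ≤ Q := by
  classical
  intro ε hε
  obtain ⟨hε0, hε1⟩ := hε
  obtain ⟨hκ0, hκ2⟩ := hκ
  rcases Nat.eq_zero_or_pos m with hm | hm
  · subst hm
    exact ⟨1, le_refl 1, fun lam _ x _ _ s _ => (s 0).elim0⟩
  have : NeZero m := ⟨hm.ne'⟩
  -- the compact set where all iterates live
  set K : Set X := Metric.closedBall θ (3 * M) ∩ C with hKdef
  have hKcomp : IsCompact K := hcomp (3 * M) (by linarith)
  have hKsub : K ⊆ C := Set.inter_subset_right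
  -- for each i, a uniform decrease δ i
  have hdelta : ∀ i : Fin m, ∃ δ > (0:ℝ), ∀ y ∈ K, ε ≤ ‖T i y - y‖ →
      ‖zs - T i y‖ + δ ≤ ‖zs - y‖ := by
    intro i
    set S : Set X := {y ∈ K | ε ≤ ‖T i y - y‖} with hSdef
    have hSsubK : S ⊆ K := fun y hy => hy.1
    have hScl : IsClosed S := by
      have h1 : ContinuousOn (fun y => ‖T i y - y‖) K :=
        (((hTcont i).mono hKsub).sub (continuousOn_id)).norm
      have : S = K ∩ (fun y => ‖T i y - y‖) ⁻¹' (Set.Ici ε) := by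
        ext y; simp [hSdef, Set.mem_setOf_eq, and_comm]
      rw [this]
      exact h1.preimage_isClosed_of_isClosed (hKcomp.isClosed) isClosed_Ici
    have hScomp : IsCompact S := hKcomp.of_isClosed_subset hScl hSsubK
    rcases S.eq_empty_or_nonempty with hSe | hSne
    · exact ⟨1, one_pos, fun y hyK hyε => absurd (show y ∈ S from ⟨hyK, hyε⟩)
        (by rw [hSe]; exact Set.notMem_empty y)⟩
    · have hcontg : ContinuousOn (fun y => ‖zs - y‖ - ‖zs - T i y‖) S := by
        have : ContinuousOn (T i) S := (hTcont i).mono (hSsubK.trans hKsub)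
        exact ((continuousOn_const.sub continuousOn_id).norm).sub
          ((continuousOn_const.sub this).norm)
      obtain ⟨y₀, hy₀S, hy₀min⟩ := hScomp.exists_isMinOn hSne hcontg
      have hy₀C : y₀ ∈ C := hKsub (hSsubK hy₀S)
      have hy₀ne : T i y₀ ≠ y₀ := by
        intro h
        have := hy₀S.2
        rw [h, sub_self, norm_zero] at this
        linarith
      have hpos : 0 < ‖zs - y₀‖ - ‖zs - T i y₀‖ := by
        have := (hpara i zs hzs (hfix i) y₀ hy₀C).2 hy₀ne
        linarith
      refine ⟨‖zs - y₀‖ - ‖zs - T i y₀‖, hpos, fun y hyK hyε => ?_⟩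
      have hyS : y ∈ S := ⟨hyK, hyε⟩
      have := hy₀min hyS
      simp only [Set.mem_setOf_eq] at this
      linarith [this]
  choose δ hδpos hδ using hdelta
  set δ₀ : ℝ := Finset.univ.inf' (Finset.univ_nonempty) δ with hδ₀def
  have hδ₀pos : 0 < δ₀ := by
    rw [hδ₀def, Finset.lt_inf'_iff]
    exact fun i _ => hδpos i
  have hδ₀le : ∀ i, δ₀ ≤ δ i := fun i => Finset.inf'_le δ (Finset.mem_univ i)
  set c : ℝ := κ * δ₀ with hcdef
  have hcpos : 0 < c := mul_pos hκ0 hδ₀pos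
  refine ⟨⌈(2 * M) / c⌉₊ + 1, Nat.le_add_left 1 _, ?_⟩
  intro lam hlam x hx hx0 s hrec
  -- Fejér monotonicity
  have hlam0 : ∀ t, 0 < lam t := fun t => lt_trans hκ0 (hlam t).1
  have hlam1 : ∀ t, lam t < 1 := fun t => lt_of_lt_of_le (hlam t).2 (by linarith)
  have hsplit : ∀ t, zs - x (t + 1)
      = (1 - lam t) • (zs - x t) + lam t • (zs - T (s t) (x t)) := by
    intro t; rw [hrec t]; module
  have hstep : ∀ t, ‖zs - x (t+1)‖ ≤ (1 - lam t) * ‖zs - x t‖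
      + lam t * ‖zs - T (s t) (x t)‖ := by
    intro t
    rw [hsplit t]
    calc ‖(1 - lam t) • (zs - x t) + lam t • (zs - T (s t) (x t))‖
        ≤ ‖(1 - lam t) • (zs - x t)‖ + ‖lam t • (zs - T (s t) (x t))‖ :=
          norm_add_le _ _
      _ = (1 - lam t) * ‖zs - x t‖ + lam t * ‖zs - T (s t) (x t)‖ := by
          rw [norm_smul, norm_smul, Real.norm_of_nonneg (by linarith [hlam1 t]),
            Real.norm_of_nonneg (hlam0 t).le]
  have hweak : ∀ t, ‖zs - T (s t) (x t)‖ ≤ ‖zs - x t‖ := fun t =>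
    (hpara (s t) zs hzs (hfix (s t)) (x t) (hx t)).1
  have hmono : ∀ t, ‖zs - x (t+1)‖ ≤ ‖zs - x t‖ := by
    intro t
    calc ‖zs - x (t+1)‖ ≤ (1 - lam t) * ‖zs - x t‖ + lam t * ‖zs - T (s t) (x t)‖ :=
          hstep t
      _ ≤ (1 - lam t) * ‖zs - x t‖ + lam t * ‖zs - x t‖ := by
          nlinarith [hweak t, hlam0 t]
      _ = ‖zs - x t‖ := by ring
  have ha0 : ‖zs - x 0‖ ≤ 2 * M := by
    have h1 : ‖zs - θ‖ ≤ M := by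
      simpa [dist_eq_norm] using hzsball
    have h2 : ‖θ - x 0‖ ≤ M := by rw [norm_sub_rev]; exact hx0
    calc ‖zs - x 0‖ ≤ ‖zs - θ‖ + ‖θ - x 0‖ := norm_sub_le_norm_sub_add_norm_sub _ _ _
      _ ≤ 2 * M := by linarith
  have haT : ∀ t, ‖zs - x t‖ ≤ 2 * M := by
    intro t
    induction t with
    | zero => exact ha0
    | succ n ih => exact le_trans (hmono n) ih
  have hxK : ∀ t, x t ∈ K := by
    intro t
    refine ⟨?_, hx t⟩
    rw [Metric.mem_closedBall, dist_eq_norm]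
    have h1 : ‖zs - θ‖ ≤ M := by simpa [dist_eq_norm] using hzsball
    have h2 : ‖x t - zs‖ ≤ 2 * M := by rw [norm_sub_rev]; exact haT t
    calc ‖x t - θ‖ ≤ ‖x t - zs‖ + ‖zs - θ‖ := norm_sub_le_norm_sub_add_norm_sub _ _ _
      _ ≤ 3 * M := by linarith
  -- decrease at bad steps
  have hdec : ∀ t, ε < ‖x t - x (t+1)‖ → ‖zs - x (t+1)‖ ≤ ‖zs - x t‖ - c := by
    intro t ht
    have hdiff : x t - x (t+1) = lam t • (x t - T (s t) (x t)) := by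
      rw [hrec t]; module
    have hnorm : ‖x t - x (t+1)‖ = lam t * ‖x t - T (s t) (x t)‖ := by
      rw [hdiff, norm_smul, Real.norm_of_nonneg (hlam0 t).le]
    have hbig : ε ≤ ‖T (s t) (x t) - x t‖ := by
      rw [norm_sub_rev]
      nlinarith [hnorm, ht, hlam1 t, norm_nonneg (x t - T (s t) (x t)), hlam0 t]
    have hd := hδ (s t) (x t) (hxK t) hbig
    have hκlam : κ < lam t := (hlam t).1
    calc ‖zs - x (t+1)‖ ≤ (1 - lam t) * ‖zs - x t‖ + lam t * ‖zs - T (s t) (x t)‖ :=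
          hstep t
      _ ≤ (1 - lam t) * ‖zs - x t‖ + lam t * (‖zs - x t‖ - δ (s t)) := by
          nlinarith [hlam0 t]
      _ = ‖zs - x t‖ - lam t * δ (s t) := by ring
      _ ≤ ‖zs - x t‖ - c := by
          have := hδ₀le (s t)
          rw [hcdef]
          nlinarith [hlam0 t, hδ₀pos]
  -- counting
  set D : ℕ → ℕ := fun N => ((Finset.range N).filter (fun t => ε < ‖x t - x (t+1)‖)).card
    with hDdef
  have hcount : ∀ N, ‖zs - x N‖ + (D N : ℝ) * c ≤ ‖zs - x 0‖ := by
    intro N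
    induction N with
    | zero => simp [hDdef]
    | succ n ih =>
      have hr : D (n+1) = D n + (if ε < ‖x n - x (n+1)‖ then 1 else 0) := by
        rw [hDdef]
        simp only [Finset.range_add_one, Finset.filter_insert]
        split
        · rw [Finset.card_insert_of_notMem (by simp)]
        · simp
      by_cases hb : ε < ‖x n - x (n+1)‖
      · rw [hr, if_pos hb]
        push_cast
        have := hdec n hb
        linarith
      · rw [hr, if_neg hb]
        push_cast
        have := hmono n
        linarith
  have hDle : ∀ N, D N ≤ ⌈(2 * M) / c⌉₊ + 1 := by
    intro N
    have h1 : (D N : ℝ) * c ≤ 2 * M := by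
      have := hcount N
      have := norm_nonneg (zs - x N)
      linarith [haT 0]
    have h2 : (D N : ℝ) ≤ (2 * M) / c := by
      rw [le_div_iff₀ hcpos]; exact h1
    have h3 : D N ≤ ⌈(2 * M) / c⌉₊ := by
      exact_mod_cast h2.trans (Nat.le_ceil _)
    omega
  set B : Set ℕ := {t : ℕ | ‖x t - x (t + 1)‖ > ε} with hBdef
  have hBsub : ∀ F : Finset ℕ, ↑F ⊆ B → F.card ≤ ⌈(2 * M) / c⌉₊ + 1 := by
    intro F hF
    have hFr : F ⊆ (Finset.range (F.sup id + 1)).filter (fun t => ε < ‖x t - x (t+1)‖) := by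
      intro t htF
      rw [Finset.mem_filter, Finset.mem_range]
      refine ⟨Nat.lt_succ_of_le (Finset.le_sup (f := id) htF), ?_⟩
      exact hF htF
    exact le_trans (Finset.card_le_card hFr) (hDle _)
  have hBfin : B.Finite := by
    by_contra hinf
    obtain ⟨F, hFsub, hFcard⟩ := (show B.Infinite from hinf).exists_subset_card_eq
      (⌈(2 * M) / c⌉₊ + 2)
    have := hBsub F hFsub
    omega
  refine ⟨hBfin, ?_⟩
  rw [Set.ncard_eq_toFinset_card B hBfin]
  exact hBsub hBfin.toFinset (by rw [Set.Finite.coe_toFinset])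

theorem stmt_8 {X : Type*} [NormedAddCommGroup X] [NormedSpace ℝ X]
    (C : Set X) (hCne : C.Nonempty) (hCcl : IsClosed C) (hCconv : Convex ℝ C)
    (θ : X) (hθ : θ ∈ C)
    (hcomp : ∀ M > (0:ℝ), IsCompact (Metric.closedBall θ M ∩ C))
    (m : ℕ) (T : Fin m → X → X)
    (hTmaps : ∀ i, Set.MapsTo (T i) C C)
    (hTcont : ∀ i, ContinuousOn (T i) C)
    (hpara : ∀ i, ∀ z ∈ C, T i z = z → ∀ x ∈ C,
      ‖z - T i x‖ ≤ ‖z - x‖ ∧ (T i x ≠ x → ‖z - T i x‖ < ‖z - x‖))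
    (M : ℝ) (hM : 0 < M)
    (zs : X) (hzs : zs ∈ C) (hfix : ∀ i, T i zs = zs)
    (hzsball : zs ∈ Metric.closedBall θ M)
    (κ : ℝ) (hκ : κ ∈ Set.Ioo (0:ℝ) (1/2)) :
    ∀ ε ∈ Set.Ioo (0:ℝ) 1, ∃ Q : ℕ, 1 ≤ Q ∧
      ∀ (lam : ℕ → ℝ), (∀ t, lam t ∈ Set.Ioo κ (1 - κ)) →
      ∀ (x : ℕ → X), (∀ t, x t ∈ C) → ‖x 0 - θ‖ ≤ M →
      ∀ (s : ℕ → Fin m),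
        (∀ t, x (t + 1) = (1 - lam t) • x t + lam t • T (s t) (x t)) →
          ({t : ℕ | ‖x t - x (t + 1)‖ > ε}.Finite ∧
            {t : ℕ | ‖x t - x (t + 1)‖ > ε}.ncard ≤ Q) ∧
          Filter.Tendsto (fun t => ‖x t - x (t + 1)‖) Filter.atTop (nhds 0) := by
  have key := aux_key C hCcl θ hcomp m T hTcont hpara M hM zs hzs hfix hzsball κ hκ
  intro ε hε
  obtain ⟨Q, hQ1, hQ⟩ := key ε hε
  refine ⟨Q, hQ1, fun lam hlam x hx hx0 s hrec =>
    ⟨hQ lam hlam x hx hx0 s hrec, ?_⟩⟩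
  rw [Metric.tendsto_atTop]
  intro ε' hε'
  set ε'' : ℝ := min (ε' / 2) (1 / 2) with hε''def
  have hε''mem : ε'' ∈ Set.Ioo (0:ℝ) 1 := by
    constructor
    · exact lt_min (by linarith) (by norm_num)
    · exact lt_of_le_of_lt (min_le_right _ _) (by norm_num)
  have hε''lt : ε'' < ε' := lt_of_le_of_lt (min_le_left _ _) (by linarith)
  obtain ⟨Q', _, hQ'⟩ := key ε'' hε''mem
  have hfin := (hQ' lam hlam x hx hx0 s hrec).1
  obtain ⟨N, hN⟩ := hfin.bddAbove
  refine ⟨N + 1, fun n hn => ?_⟩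
  have hnot : ¬ (ε'' < ‖x n - x (n+1)‖) := by
    intro h
    have := hN (show n ∈ {t : ℕ | ‖x t - x (t + 1)‖ > ε''} from h)
    omega
  push_neg at hnot
  rw [Real.dist_eq, sub_zero, abs_of_nonneg (norm_nonneg _)]
  exact lt_of_le_of_lt hnot hε''lt
end

section
/- Let (X,‖·‖) be a normed space, C ⊆ X nonempty closed convex, θ ∈ C with B(θ,M) ∩ C compact for all M > 0. Let T_1,…,T_m : C → C be continuous paracontractions with a common fixed point, φ : X → nonempty subsets of {1,…,m} with: for each x ∈ C there is δ > 0 such that φ(y) ⊆ φ(x) for all y ∈ B(x,δ) ∩ C. Fix κ ∈ (0,1/2) and {λ_t} ⊆ (κ,1−κ). If {x_t} ⊆ C satisfies x_{t+1} ∈ (1−λ_t)x_t + λ_t{T_i(x_t) : i ∈ φ(x_t)} for all t, then {x_t} converges to some x* ∈ C, and there is t_0 such that for t ≥ t_0, φ(x_t) ⊆ φ(x*) and whenever x_{t+1} = (1−λ_t)x_t + λ_t T_i(x_t) with i ∈ φ(x_t), one has T_i(x*) = x*. -/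
theorem stmt_9 {X : Type*} [NormedAddCommGroup X] [NormedSpace ℝ X]
    (C : Set X) (hCne : C.Nonempty) (hCcl : IsClosed C) (hCconv : Convex ℝ C)
    (θ : X) (hθ : θ ∈ C)
    (hcomp : ∀ M > (0:ℝ), IsCompact (Metric.closedBall θ M ∩ C))
    (m : ℕ) (T : Fin m → X → X)
    (hTmaps : ∀ i, Set.MapsTo (T i) C C)
    (hTcont : ∀ i, ContinuousOn (T i) C)
    (hpara : ∀ i, ∀ z ∈ C, T i z = z → ∀ x ∈ C,
      ‖z - T i x‖ ≤ ‖z - x‖ ∧ (T i x ≠ x → ‖z - T i x‖ < ‖z - x‖))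
    (hcommon : ∃ z ∈ C, ∀ i, T i z = z)
    (φ : X → Set (Fin m)) (hφne : ∀ x, (φ x).Nonempty)
    (hφosc : ∀ x ∈ C, ∃ δ > (0:ℝ), ∀ y ∈ C, dist y x ≤ δ → φ y ⊆ φ x)
    (κ : ℝ) (hκ : κ ∈ Set.Ioo (0:ℝ) (1/2))
    (lam : ℕ → ℝ) (hlam : ∀ t, lam t ∈ Set.Ioo κ (1 - κ))
    (x : ℕ → X) (hx : ∀ t, x t ∈ C)
    (hstep : ∀ t, ∃ i ∈ φ (x t), x (t + 1) = (1 - lam t) • x t + lam t • T i (x t)) :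
    ∃ xs ∈ C, Filter.Tendsto x Filter.atTop (nhds xs) ∧
      ∃ t₀ : ℕ, ∀ t ≥ t₀, φ (x t) ⊆ φ xs ∧
        ∀ i ∈ φ (x t), x (t + 1) = (1 - lam t) • x t + lam t • T i (x t) →
          T i xs = xs := by
  classical
  obtain ⟨z, hzC, hz⟩ := hcommon
  obtain ⟨hκ0, hκ2⟩ := hκ
  have hlam0 : ∀ t, 0 < lam t := fun t => lt_trans hκ0 (hlam t).1
  have hlam1 : ∀ t, lam t < 1 := fun t => lt_of_lt_of_le (hlam t).2 (by linarith)
  -- basic inequality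
  have hineq : ∀ (w : X) (t : ℕ) (i : Fin m),
      x (t+1) = (1 - lam t) • x t + lam t • T i (x t) →
      ‖w - x (t+1)‖ ≤ (1 - lam t) * ‖w - x t‖ + lam t * ‖w - T i (x t)‖ := by
    intro w t i heq
    have hid : w - x (t+1) = (1 - lam t) • (w - x t) + lam t • (w - T i (x t)) := by
      rw [heq]; module
    rw [hid]
    refine (norm_add_le _ _).trans ?_
    rw [norm_smul, norm_smul, Real.norm_eq_abs, Real.norm_eq_abs,
      abs_of_nonneg (by linarith [hlam1 t]), abs_of_nonneg (hlam0 t).le]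
  have hcontract : ∀ w ∈ C, ∀ (t : ℕ) (i : Fin m), T i w = w →
      x (t+1) = (1 - lam t) • x t + lam t • T i (x t) →
      ‖w - x (t+1)‖ ≤ ‖w - x t‖ := by
    intro w hw t i hfix heq
    have h2 := (hpara i w hw hfix (x t) (hx t)).1
    have h3 := hineq w t i heq
    nlinarith [hlam0 t, hlam1 t, mul_le_mul_of_nonneg_left h2 (hlam0 t).le]
  have hmono : ∀ t, ‖z - x (t+1)‖ ≤ ‖z - x t‖ := by
    intro t; obtain ⟨i, _, heq⟩ := hstep t
    exact hcontract z hzC t i (hz i) heq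
  have hanti : Antitone (fun t => ‖z - x t‖) := antitone_nat_of_succ_le hmono
  have hbdd : BddBelow (Set.range (fun t => ‖z - x t‖)) :=
    ⟨0, by rintro _ ⟨t, rfl⟩; exact norm_nonneg _⟩
  set d : ℝ := ⨅ t, ‖z - x t‖ with hdd
  have hd : Filter.Tendsto (fun t => ‖z - x t‖) Filter.atTop (nhds d) :=
    tendsto_atTop_ciInf hanti hbdd
  have hda : ∀ t, d ≤ ‖z - x t‖ := fun t => ciInf_le hbdd t
  -- boundedness
  set M : ℝ := ‖z - x 0‖ + ‖z - θ‖ + 1 with hMdef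
  have hM0 : (0:ℝ) < M := by positivity
  have hxK : ∀ t, x t ∈ Metric.closedBall θ M ∩ C := by
    intro t
    refine ⟨Metric.mem_closedBall.2 ?_, hx t⟩
    have h1 : dist (x t) θ ≤ dist (x t) z + dist z θ := dist_triangle _ _ _
    have h2 : dist (x t) z = ‖z - x t‖ := by rw [dist_comm, dist_eq_norm]
    have h3 : dist z θ = ‖z - θ‖ := dist_eq_norm _ _
    have h4 : ‖z - x t‖ ≤ ‖z - x 0‖ := hanti (Nat.zero_le t)
    rw [hMdef]; rw [h2, h3] at h1; linarith
  obtain ⟨xs, hxsK, ψ, hψ, hψt⟩ := (hcomp M hM0).tendsto_subseq hxK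
  have hxsC : xs ∈ C := hxsK.2
  have hzxs : ‖z - xs‖ = d := by
    have h1 : Filter.Tendsto (fun k => ‖z - x (ψ k)‖) Filter.atTop (nhds ‖z - xs‖) :=
      (Filter.Tendsto.const_sub z hψt).norm
    have h2 : Filter.Tendsto (fun k => ‖z - x (ψ k)‖) Filter.atTop (nhds d) :=
      hd.comp hψ.tendsto_atTop
    exact tendsto_nhds_unique h1 h2
  -- key localization lemma
  have keyP : ∀ i : Fin m, ∃ ρ > (0:ℝ), ∃ N : ℕ, ∀ t ≥ N,
      dist (x t) xs ≤ ρ →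
      x (t+1) = (1 - lam t) • x t + lam t • T i (x t) → T i xs = xs := by
    intro i
    by_cases hfix : T i xs = xs
    · exact ⟨1, one_pos, 0, fun _ _ _ _ => hfix⟩
    · have hlt : ‖z - T i xs‖ < ‖z - xs‖ := (hpara i z hzC (hz i) xs hxsC).2 hfix
      rw [hzxs] at hlt
      set ε : ℝ := (d - ‖z - T i xs‖)/2 with hε
      have hε0 : 0 < ε := by rw [hε]; linarith
      have hc := (hTcont i) xs hxsC
      rw [Metric.continuousWithinAt_iff] at hc
      obtain ⟨ρ, hρpos, hρ⟩ := hc ε hε0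
      obtain ⟨N, hN⟩ := Filter.eventually_atTop.1
        (hd.eventually_lt_const (show d < d + κ*ε by nlinarith))
      refine ⟨ρ/2, by positivity, N, fun t ht hdist heq => ?_⟩
      exfalso
      have hT : dist (T i (x t)) (T i xs) < ε :=
        hρ (hx t) (lt_of_le_of_lt hdist (by linarith))
      have hzT : ‖z - T i (x t)‖ ≤ d - ε := by
        have h1 : dist z (T i (x t)) ≤ dist z (T i xs) + dist (T i xs) (T i (x t)) :=
          dist_triangle _ _ _
        rw [dist_eq_norm, dist_eq_norm, dist_comm (T i xs)] at h1
        have h2 : ‖z - T i xs‖ = d - 2*ε := by rw [hε]; ring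
        linarith
      have h2 := hineq z t i heq
      have h3 := hN t ht
      have h4 := hda (t+1)
      have h5 := hda t
      have h6 := (hlam t).1
      have h7 := hlam1 t
      nlinarith [mul_le_mul_of_nonneg_left hzT (hlam0 t).le,
        mul_pos hε0 (sub_pos.2 h6)]
  choose ρf hρf0 Nf hNf using keyP
  have hFin : Nonempty (Fin m) := ⟨(hφne xs).some⟩
  obtain ⟨δ, hδ0, hδ⟩ := hφosc xs hxsC
  set ρ0 : ℝ := min δ (Finset.univ.inf' Finset.univ_nonempty ρf) with hρ0def
  have hρ0pos : 0 < ρ0 :=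
    lt_min hδ0 ((Finset.lt_inf'_iff _).2 fun i _ => hρf0 i)
  have hρ0δ : ρ0 ≤ δ := min_le_left _ _
  have hρ0i : ∀ i, ρ0 ≤ ρf i := fun i =>
    (min_le_right _ _).trans (Finset.inf'_le _ (Finset.mem_univ i))
  set N0 : ℕ := Finset.univ.sup Nf with hN0def
  have hN0i : ∀ i, Nf i ≤ N0 := fun i => Finset.le_sup (Finset.mem_univ i)
  -- trapping
  have hdec : ∀ t, N0 ≤ t → dist (x t) xs ≤ ρ0 →
      dist (x (t+1)) xs ≤ dist (x t) xs := by
    intro t ht hdist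
    obtain ⟨i, _, heq⟩ := hstep t
    have hfix : T i xs = xs := hNf i t (le_trans (hN0i i) ht) (hdist.trans (hρ0i i)) heq
    have h := hcontract xs hxsC t i hfix heq
    rw [dist_eq_norm', dist_eq_norm']
    exact h
  have hstay : ∀ t, N0 ≤ t → ∀ c, dist (x t) xs ≤ c → c ≤ ρ0 →
      ∀ s, t ≤ s → dist (x s) xs ≤ c := by
    intro t ht c hc hcρ s hs
    induction s, hs using Nat.le_induction with
    | base => exact hc
    | succ s hs ih => exact le_trans (hdec s (le_trans ht hs) (ih.trans hcρ)) ih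
  have hconv : Filter.Tendsto x Filter.atTop (nhds xs) := by
    rw [Metric.tendsto_atTop]
    intro ε hε
    have hc : 0 < min (ε/2) ρ0 := lt_min (by linarith) hρ0pos
    obtain ⟨K, hK⟩ := (Metric.tendsto_atTop.1 hψt) (min (ε/2) ρ0) hc
    have h1 : dist (x (ψ (max K N0))) xs < min (ε/2) ρ0 := hK (max K N0) (le_max_left _ _)
    have h2 : N0 ≤ ψ (max K N0) := le_trans (le_max_right _ _) hψ.le_apply
    refine ⟨ψ (max K N0), fun t ht => ?_⟩
    have h3 := hstay (ψ (max K N0)) h2 (min (ε/2) ρ0) h1.le (min_le_right _ _) t ht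
    have h4 : min (ε/2) ρ0 ≤ ε/2 := min_le_left _ _
    linarith
  obtain ⟨T1, hT1⟩ := (Metric.tendsto_atTop.1 hconv) ρ0 hρ0pos
  refine ⟨xs, hxsC, hconv, max T1 N0, fun t ht => ?_⟩
  have htρ : dist (x t) xs ≤ ρ0 := (hT1 t (le_trans (le_max_left _ _) ht)).le
  have htN : N0 ≤ t := le_trans (le_max_right _ _) ht
  constructor
  · exact hδ (x t) (hx t) (htρ.trans hρ0δ)
  · intro i _ heq
    exact hNf i t (le_trans (hN0i i) htN) (htρ.trans (hρ0i i)) heq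
end
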